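/- Assume Hypotheses 1–3. Then the series σ² := ν(f²) + 2·∑_{n≥1} ν(f·(Pⁿf)) converges and σ² > 0. -/
import Mathlib


open Finset Filter Real Topology MeasureTheory

namespace CLLT

variable {X : Type*}

/-- Product of the transition weights along a path. -/
noncomputable def wt (P : X → X → ℝ) : X → List X → ℝ
  | _, [] => 1
  | x, y :: ys => P x y * wt P y ys

/-- Extension of a finite path `X₁, …, Xₙ` to a trajectory `ℕ → X` with `X₀ = x`
(values beyond time `n` are irrelevant and set to `x`). -/
def pathExt (x : X) {n : ℕ} (path : Fin n → X) : ℕ → X := fun k =>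
  if h : 1 ≤ k ∧ k ≤ n then path ⟨k - 1, by omega⟩ else x

/-- Expectation `𝔼_x (F (X₀, X₁, …))` of a functional of the first `n` steps of the
Markov chain with transition kernel `P` started at `X₀ = x`. -/
noncomputable def Ex [Fintype X] (P : X → X → ℝ) (x : X) (n : ℕ)
    (F : (ℕ → X) → ℝ) : ℝ :=
  ∑ path : Fin n → X, wt P x (List.ofFn path) * F (pathExt x path)

open Classical in
/-- Real-valued indicator of a proposition. -/
noncomputable def ind (p : Prop) : ℝ := if p then 1 else 0

/-- Partial sum `S_k = f(X₁) + ⋯ + f(X_k)` along a trajectory. -/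
noncomputable def Spath (f : X → ℝ) (ω : ℕ → X) (k : ℕ) : ℝ :=
  ∑ i ∈ Finset.Icc 1 k, f (ω i)

/-- The event `τ_y > n`, i.e. `y + S_k > 0` for all `k = 1, …, n`. -/
def survives (f : X → ℝ) (y : ℝ) (n : ℕ) (ω : ℕ → X) : Prop :=
  ∀ k ∈ Finset.Icc 1 n, 0 < y + Spath f ω k

/-- `n`-step transition kernel. -/
noncomputable def kpow [Fintype X] [DecidableEq X] (P : X → X → ℝ) : ℕ → X → X → ℝ
  | 0 => fun x x' => if x = x' then 1 else 0
  | n + 1 => fun x x' => ∑ y, P x y * kpow P n y x'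

/-- Transition operator acting on functions. -/
noncomputable def Pop [Fintype X] (P : X → X → ℝ) (g : X → ℝ) (x : X) : ℝ :=
  ∑ x', P x x' * g x'

/-- Asymptotic variance `σ² = ν(f²) + 2 ∑_{n ≥ 1} ν(f ⬝ Pⁿ f)`. -/
noncomputable def sigma2 [Fintype X] (P : X → X → ℝ) (ν f : X → ℝ) : ℝ :=
  (∑ x, f x ^ 2 * ν x) + 2 * ∑' n : ℕ, ∑ x, f x * ((Pop P)^[n + 1] f) x * ν x

/-- Hypothesis 1 (primitivity). -/
def Primitive [Fintype X] [DecidableEq X] (P : X → X → ℝ) : Prop :=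
  ∃ k₀ : ℕ, 1 ≤ k₀ ∧ ∀ x x', 0 < kpow P k₀ x x'

/-- Hypothesis 3 (non-lattice condition). -/
def NonLattice [Fintype X] (P : X → X → ℝ) (f : X → ℝ) : Prop :=
  ∀ θ a : ℝ, ∃ (n : ℕ) (g : Fin (n + 1) → X),
    (0 < ∏ i : Fin (n + 1), P (g i) (g (i + 1))) ∧
    ∀ m : ℤ, (∑ i, f (g i)) - (n + 1 : ℝ) * θ ≠ a * (m : ℝ)

/-- `P` is a stochastic matrix and `ν` is a positive invariant probability for it. -/
structure IsStochastic [Fintype X] (P : X → X → ℝ) (ν : X → ℝ) : Prop where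
  nonneg : ∀ x x', 0 ≤ P x x'
  rowSum : ∀ x, ∑ x', P x x' = 1
  nuPos : ∀ x, 0 < ν x
  nuSum : ∑ x, ν x = 1
  nuInv : ∀ x', ∑ x, ν x * P x x' = ν x'

/-- Dual kernel `P*(x, x') = ν(x') P(x', x) / ν(x)`. -/
noncomputable def dualK (P : X → X → ℝ) (ν : X → ℝ) (x x' : X) : ℝ :=
  ν x' * P x' x / ν x

/-- Sup norm of a function on a finite set. -/
noncomputable def supN [Fintype X] [Nonempty X] (ψ : X → ℝ) : ℝ := ⨆ x, |ψ x|

/-- Rayleigh density `φ₊(t) = t e^{-t²/2} 𝟙_{t ≥ 0}`. -/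
noncomputable def rayleigh (t : ℝ) : ℝ := if 0 ≤ t then t * Real.exp (-t ^ 2 / 2) else 0

/-- Centred normal density with standard deviation `s`. -/
noncomputable def gauss (s u : ℝ) : ℝ :=
  Real.exp (-u ^ 2 / (2 * s ^ 2)) / (s * Real.sqrt (2 * π))

/-- Perturbed transition operator `P_t`, as a complex matrix. -/
noncomputable def Pmat [Fintype X] (P : X → X → ℝ) (f : X → ℝ) (t : ℝ) : Matrix X X ℂ :=
  Matrix.of fun x x' => (P x x' : ℂ) * Complex.exp (Complex.I * (t : ℂ) * (f x' : ℂ))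

/-- A complex matrix viewed as a continuous linear operator on `X → ℂ`
(equipped with the sup norm). -/
noncomputable def toCLM [Fintype X] (M : Matrix X X ℂ) : (X → ℂ) →L[ℂ] (X → ℂ) :=
  LinearMap.toContinuousLinearMap M.mulVecLin

/-- Fourier transform `ĥ(t) = ∫ e^{-i t u} h(u) du`. -/
noncomputable def FT (h : ℝ → ℝ) (t : ℝ) : ℂ :=
  ∫ u : ℝ, Complex.exp (-(Complex.I * (t : ℂ) * (u : ℂ))) * (h u : ℂ)

/-- Convolution `(g ∗ k)(u) = ∫ g(v) k(u - v) dv`. -/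
noncomputable def convR (g k : ℝ → ℝ) (u : ℝ) : ℝ := ∫ v : ℝ, g v * k (u - v)

/-- Stone's kernel `κ`. -/
noncomputable def kapp (u : ℝ) : ℝ :=
  if u = 0 then 1 / (2 * π) else (Real.sin (u / 2) / (u / 2)) ^ 2 / (2 * π)

/-- Scaled kernel `κ_δ(u) = κ(u/δ)/δ`. -/
noncomputable def kappD (δ u : ℝ) : ℝ := kapp (u / δ) / δ

/-- Upper regularisation `h̄_ε(u) = sup_{v ∈ [u-ε, u+ε]} h(v)`. -/
noncomputable def upReg (h : ℝ → ℝ) (ε u : ℝ) : ℝ := sSup (h '' Set.Icc (u - ε) (u + ε))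

/-- Lower regularisation `ẖ_ε(u) = inf_{v ∈ [u-ε, u+ε]} h(v)`. -/
noncomputable def loReg (h : ℝ → ℝ) (ε u : ℝ) : ℝ := sInf (h '' Set.Icc (u - ε) (u + ε))

/-- The class `𝓗_ε`: non-negative, locally bounded, with `h`, `h̄_ε`, `ẖ_ε`
measurable and Lebesgue integrable. -/
def MemH (ε : ℝ) (h : ℝ → ℝ) : Prop :=
  (∀ u, 0 ≤ h u) ∧ (∀ K : Set ℝ, IsCompact K → BddAbove (h '' K)) ∧
  Measurable h ∧ Measurable (upReg h ε) ∧ Measurable (loReg h ε) ∧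
  Integrable h ∧ Integrable (upReg h ε) ∧ Integrable (loReg h ε)

section Aux
set_option linter.unusedSectionVars false

variable [Fintype X] [DecidableEq X] [Nonempty X] {P : X → X → ℝ} {ν : X → ℝ}

/-- Max of a function on a finite nonempty type. -/
noncomputable def Mx [Fintype X] [Nonempty X] (h : X → ℝ) : ℝ :=
  Finset.univ.sup' Finset.univ_nonempty h

/-- Min of a function on a finite nonempty type. -/
noncomputable def mx [Fintype X] [Nonempty X] (h : X → ℝ) : ℝ :=
  Finset.univ.inf' Finset.univ_nonempty h

lemma le_Mx (h : X → ℝ) (x : X) : h x ≤ Mx h := Finset.le_sup' h (Finset.mem_univ x)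

lemma mx_le (h : X → ℝ) (x : X) : mx h ≤ h x := Finset.inf'_le h (Finset.mem_univ x)

lemma weight_sum_le {w : X → ℝ} (hw : ∀ x, 0 ≤ w x) (hws : ∑ x, w x = 1) (h : X → ℝ) :
    ∑ x, w x * h x ≤ Mx h := by
  calc ∑ x, w x * h x ≤ ∑ x, w x * Mx h :=
        Finset.sum_le_sum fun x _ => mul_le_mul_of_nonneg_left (le_Mx h x) (hw x)
    _ = Mx h := by rw [← Finset.sum_mul, hws, one_mul]

lemma le_weight_sum {w : X → ℝ} (hw : ∀ x, 0 ≤ w x) (hws : ∑ x, w x = 1) (h : X → ℝ) :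
    mx h ≤ ∑ x, w x * h x := by
  calc mx h = ∑ x, w x * mx h := by rw [← Finset.sum_mul, hws, one_mul]
    _ ≤ ∑ x, w x * h x :=
        Finset.sum_le_sum fun x _ => mul_le_mul_of_nonneg_left (mx_le h x) (hw x)

lemma Pop_le_Mx (hS : IsStochastic P ν) (h : X → ℝ) (x : X) : Pop P h x ≤ Mx h :=
  weight_sum_le (hS.nonneg x) (hS.rowSum x) h

lemma mx_le_Pop (hS : IsStochastic P ν) (h : X → ℝ) (x : X) : mx h ≤ Pop P h x :=
  le_weight_sum (hS.nonneg x) (hS.rowSum x) h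

lemma kpow_nonneg (hS : IsStochastic P ν) : ∀ n x x', 0 ≤ kpow P n x x' := by
  intro n
  induction n with
  | zero => intro x x'; simp only [kpow]; split <;> norm_num
  | succ n ih =>
      intro x x'
      exact Finset.sum_nonneg fun y _ => mul_nonneg (hS.nonneg x y) (ih y x')

lemma kpow_rowSum (hS : IsStochastic P ν) : ∀ n x, ∑ x', kpow P n x x' = 1 := by
  intro n
  induction n with
  | zero => intro x; simp [kpow]
  | succ n ih =>
      intro x
      simp only [kpow]
      rw [Finset.sum_comm]
      calc ∑ y, ∑ x', P x y * kpow P n y x' = ∑ y, P x y * ∑ x', kpow P n y x' := by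
            simp [Finset.mul_sum]
        _ = ∑ y, P x y := by simp [ih]
        _ = 1 := hS.rowSum x

lemma Pop_iter (n : ℕ) (h : X → ℝ) (x : X) :
    (Pop P)^[n] h x = ∑ x', kpow P n x x' * h x' := by
  induction n generalizing x with
  | zero => simp [kpow, ite_mul]
  | succ n ih =>
      rw [Function.iterate_succ_apply']
      simp only [Pop, kpow]
      calc ∑ y, P x y * (Pop P)^[n] h y = ∑ y, ∑ x', P x y * (kpow P n y x' * h x') := by
            simp [ih, Finset.mul_sum]
        _ = ∑ x', ∑ y, P x y * (kpow P n y x' * h x') := Finset.sum_comm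
        _ = ∑ x', (∑ y, P x y * kpow P n y x') * h x' := by
            congr 1; ext x'; rw [Finset.sum_mul]; congr 1; ext y; ring

lemma nu_Pop (hS : IsStochastic P ν) (h : X → ℝ) :
    ∑ x, ν x * Pop P h x = ∑ x, ν x * h x := by
  simp only [Pop, Finset.mul_sum]
  rw [Finset.sum_comm]
  congr 1; ext x'
  calc ∑ x, ν x * (P x x' * h x') = (∑ x, ν x * P x x') * h x' := by
        rw [Finset.sum_mul]; congr 1; ext x; ring
    _ = ν x' * h x' := by rw [hS.nuInv x']

lemma nu_Pop_iter (hS : IsStochastic P ν) (n : ℕ) (h : X → ℝ) :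
    ∑ x, ν x * (Pop P)^[n] h x = ∑ x, ν x * h x := by
  induction n generalizing h with
  | zero => simp
  | succ n ih =>
      calc ∑ x, ν x * (Pop P)^[n + 1] h x = ∑ x, ν x * (Pop P)^[n] (Pop P h) x := by
            simp [Function.iterate_succ_apply]
        _ = ∑ x, ν x * Pop P h x := ih (Pop P h)
        _ = ∑ x, ν x * h x := nu_Pop hS h

lemma doeblin (hS : IsStochastic P ν) {k₀ : ℕ} {α : ℝ}
    (hk : ∀ x x', α ≤ kpow P k₀ x x') (h : X → ℝ) :
    Mx ((Pop P)^[k₀] h) - mx ((Pop P)^[k₀] h)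
      ≤ (1 - (Fintype.card X : ℝ) * α) * (Mx h - mx h) := by
  set N : ℝ := (Fintype.card X : ℝ) with hN
  set S : ℝ := ∑ x', h x' with hs
  have hsub : ∀ x, ∑ x', (kpow P k₀ x x' - α) = 1 - N * α := by
    intro x
    rw [Finset.sum_sub_distrib, kpow_rowSum hS k₀ x, Finset.sum_const, Finset.card_univ]
    simp [hN, nsmul_eq_mul]
  have hdec : ∀ x, (Pop P)^[k₀] h x = ∑ x', (kpow P k₀ x x' - α) * h x' + α * S := by
    intro x
    rw [Pop_iter, hs, Finset.mul_sum, ← Finset.sum_add_distrib]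
    congr 1; ext x'; ring
  have hup : ∀ x, (Pop P)^[k₀] h x ≤ (1 - N * α) * Mx h + α * S := by
    intro x
    rw [hdec x]
    have : ∑ x', (kpow P k₀ x x' - α) * h x' ≤ ∑ x', (kpow P k₀ x x' - α) * Mx h :=
      Finset.sum_le_sum fun x' _ =>
        mul_le_mul_of_nonneg_left (le_Mx h x') (by linarith [hk x x'])
    rw [← Finset.sum_mul] at this
    rw [hsub x] at this
    linarith
  have hlo : ∀ x, (1 - N * α) * mx h + α * S ≤ (Pop P)^[k₀] h x := by
    intro x
    rw [hdec x]
    have : ∑ x', (kpow P k₀ x x' - α) * mx h ≤ ∑ x', (kpow P k₀ x x' - α) * h x' :=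
      Finset.sum_le_sum fun x' _ =>
        mul_le_mul_of_nonneg_left (mx_le h x') (by linarith [hk x x'])
    rw [← Finset.sum_mul] at this
    rw [hsub x] at this
    linarith
  have h1 : Mx ((Pop P)^[k₀] h) ≤ (1 - N * α) * Mx h + α * S :=
    Finset.sup'_le _ _ fun x _ => hup x
  have h2 : (1 - N * α) * mx h + α * S ≤ mx ((Pop P)^[k₀] h) :=
    Finset.le_inf' _ _ fun x _ => hlo x
  linarith

end Aux

/-- Lemma 8.3: the asymptotic variance is well defined and
positive. -/
theorem asymptotic_variance_pos [Fintype X] [DecidableEq X] [Nonempty X]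
    (P : X → X → ℝ) (ν f : X → ℝ) (hS : IsStochastic P ν)
    (h1 : Primitive P) (h2 : ∑ x, f x * ν x = 0) (h3 : NonLattice P f) :
    Summable (fun n : ℕ => ∑ x, f x * ((Pop P)^[n + 1] f) x * ν x) ∧
      0 < sigma2 P ν f := by
  classical
  obtain ⟨k₀, hk₀1, hk₀pos⟩ := h1
  -- the Doeblin constant
  obtain ⟨α, hα, hαle⟩ : ∃ α : ℝ, 0 < α ∧ ∀ x x', α ≤ kpow P k₀ x x' := by
    refine ⟨mx (fun x => mx (kpow P k₀ x)), ?_, ?_⟩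
    · obtain ⟨x₀, -, h0⟩ :=
        Finset.exists_mem_eq_inf' Finset.univ_nonempty (fun x => mx (kpow P k₀ x))
      obtain ⟨x₁, -, h1'⟩ :=
        Finset.exists_mem_eq_inf' Finset.univ_nonempty (kpow P k₀ x₀)
      show (0:ℝ) < Finset.univ.inf' Finset.univ_nonempty (fun x => mx (kpow P k₀ x))
      rw [h0]
      show (0:ℝ) < Finset.univ.inf' Finset.univ_nonempty (kpow P k₀ x₀)
      rw [h1']
      exact hk₀pos x₀ x₁
    · intro x x'
      exact le_trans (mx_le (fun x => mx (kpow P k₀ x)) x) (mx_le (kpow P k₀ x) x')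
  set N : ℝ := (Fintype.card X : ℝ) with hN
  set c : ℝ := 1 - N * α with hc
  have hNpos : (1:ℝ) ≤ N := by
    have := Fintype.card_pos (α := X)
    simp only [hN]
    exact_mod_cast this
  have hc0 : 0 ≤ c := by
    have x := Classical.arbitrary X
    have h1' : ∑ x', kpow P k₀ x x' = 1 := kpow_rowSum hS k₀ x
    have h2' : ∑ x', α ≤ ∑ x', kpow P k₀ x x' :=
      Finset.sum_le_sum fun x' _ => hαle x x'
    rw [h1', Finset.sum_const, Finset.card_univ, nsmul_eq_mul] at h2'
    simp only [hc, hN]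
    linarith
  have hc1 : c < 1 := by
    have : 0 < N * α := by positivity
    simp only [hc]; linarith
  -- the oscillation sequence
  set u : ℕ → ℝ := fun n => Mx ((Pop P)^[n] f) - mx ((Pop P)^[n] f) with hu
  have hu0 : ∀ n, 0 ≤ u n := by
    intro n
    have x := Classical.arbitrary X
    have := le_trans (mx_le ((Pop P)^[n] f) x) (le_Mx ((Pop P)^[n] f) x)
    simp only [hu]; linarith
  have humono : ∀ n, u (n + 1) ≤ u n := by
    intro n
    have hM : Mx ((Pop P)^[n + 1] f) ≤ Mx ((Pop P)^[n] f) := by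
      apply Finset.sup'_le
      intro x _
      rw [Function.iterate_succ_apply']
      exact Pop_le_Mx hS _ x
    have hm : mx ((Pop P)^[n] f) ≤ mx ((Pop P)^[n + 1] f) := by
      apply Finset.le_inf'
      intro x _
      rw [Function.iterate_succ_apply']
      exact mx_le_Pop hS _ x
    simp only [hu]; linarith
  have hanti : Antitone u := antitone_nat_of_succ_le humono
  have hustep : ∀ n, u (n + k₀) ≤ c * u n := by
    intro n
    have : (Pop P)^[n + k₀] f = (Pop P)^[k₀] ((Pop P)^[n] f) := by
      rw [Nat.add_comm, Function.iterate_add_apply]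
    simp only [hu, this]
    exact doeblin hS hαle _
  -- geometric bound
  have hgeo : ∀ n, u n ≤ u 0 * c ^ (n / k₀) := by
    intro n
    induction n using Nat.strong_induction_on with
    | _ n ih =>
      by_cases hn : n < k₀
      · rw [Nat.div_eq_of_lt hn, pow_zero, mul_one]
        exact hanti (Nat.zero_le n)
      · push_neg at hn
        have h1' : u n ≤ c * u (n - k₀) := by
          have := hustep (n - k₀)
          rwa [Nat.sub_add_cancel hn] at this
        have h2' := ih (n - k₀) (by omega)
        have hdiv : n / k₀ = (n - k₀) / k₀ + 1 := Nat.div_eq_sub_div (by omega) hn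
        rw [hdiv, pow_succ]
        calc u n ≤ c * u (n - k₀) := h1'
          _ ≤ c * (u 0 * c ^ ((n - k₀) / k₀)) := mul_le_mul_of_nonneg_left h2' hc0
          _ = u 0 * (c ^ ((n - k₀) / k₀) * c) := by ring
  -- summability of the geometric majorant
  have hsumv : Summable (fun n : ℕ => u 0 * c ^ (n / k₀)) := by
    apply summable_of_sum_range_le (c := u 0 * ((k₀ : ℝ) * (1 - c)⁻¹))
    · intro n
      exact mul_nonneg (hu0 0) (pow_nonneg hc0 _)
    · intro n
      rw [← Finset.mul_sum]
      apply mul_le_mul_of_nonneg_left _ (hu0 0)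
      have key : ∑ i ∈ Finset.range n, c ^ (i / k₀) ≤ (k₀ : ℝ) * (1 - c)⁻¹ := by
        have hmap : ∀ i ∈ Finset.range n, i / k₀ ∈ Finset.range n := by
          intro i hi
          simp only [Finset.mem_range] at hi ⊢
          exact lt_of_le_of_lt (Nat.div_le_self i k₀) hi
        calc ∑ i ∈ Finset.range n, c ^ (i / k₀)
            = ∑ j ∈ Finset.range n, ∑ i ∈ (Finset.range n).filter (fun i => i / k₀ = j),
                c ^ (i / k₀) := (Finset.sum_fiberwise_of_maps_to hmap _).symm
          _ ≤ ∑ j ∈ Finset.range n, (k₀ : ℝ) * c ^ j := by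
              apply Finset.sum_le_sum
              intro j _
              have heq : ∑ i ∈ (Finset.range n).filter (fun i => i / k₀ = j), c ^ (i / k₀)
                  = ((Finset.range n).filter (fun i => i / k₀ = j)).card * c ^ j := by
                rw [Finset.sum_congr rfl (fun i hi => by
                  simp only [Finset.mem_filter] at hi
                  rw [hi.2]), Finset.sum_const, nsmul_eq_mul]
              rw [heq]
              have hcard : ((Finset.range n).filter (fun i => i / k₀ = j)).card ≤ k₀ := by
                have hsub : (Finset.range n).filter (fun i => i / k₀ = j)
                    ⊆ Finset.Ico (j * k₀) (j * k₀ + k₀) := by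
                  intro i hi
                  simp only [Finset.mem_filter, Finset.mem_range] at hi
                  simp only [Finset.mem_Ico]
                  constructor
                  · have := Nat.div_mul_le_self i k₀
                    rw [hi.2] at this
                    omega
                  · have h' := Nat.lt_mul_div_succ i (by omega : 0 < k₀)
                    have h'' : k₀ * (i / k₀ + 1) = i / k₀ * k₀ + k₀ := by ring
                    rw [h'', hi.2] at h'
                    exact h'
                have := Finset.card_le_card hsub
                rwa [Nat.card_Ico, Nat.add_sub_cancel_left] at this
              exact mul_le_mul_of_nonneg_right (by exact_mod_cast hcard) (pow_nonneg hc0 j)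
          _ = (k₀ : ℝ) * ∑ j ∈ Finset.range n, c ^ j := by rw [Finset.mul_sum]
          _ ≤ (k₀ : ℝ) * (1 - c)⁻¹ := by
              apply mul_le_mul_of_nonneg_left _ (by positivity)
              have hsumg : Summable (fun j : ℕ => c ^ j) := summable_geometric_of_lt_one hc0 hc1
              calc ∑ j ∈ Finset.range n, c ^ j ≤ ∑' j : ℕ, c ^ j :=
                    Summable.sum_le_tsum _ (fun j _ => pow_nonneg hc0 j) hsumg
                _ = (1 - c)⁻¹ := tsum_geometric_of_lt_one hc0 hc1
      exact key
  have hsumu : Summable u := Summable.of_nonneg_of_le hu0 hgeo hsumv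
  -- pointwise bound on iterates
  have h2' : ∑ x, ν x * f x = 0 := by
    rw [← h2]; congr 1; ext x; ring
  have hcenter : ∀ n, ∑ x, ν x * (Pop P)^[n] f x = 0 := by
    intro n; rw [nu_Pop_iter hS n f, h2']
  have hnuw : ∀ x : X, 0 ≤ ν x := fun x => le_of_lt (hS.nuPos x)
  have habs : ∀ n x, |(Pop P)^[n] f x| ≤ u n := by
    intro n x
    have hm : mx ((Pop P)^[n] f) ≤ 0 := by
      have := le_weight_sum hnuw hS.nuSum ((Pop P)^[n] f)
      rw [hcenter n] at this; exact this
    have hM : 0 ≤ Mx ((Pop P)^[n] f) := by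
      have := weight_sum_le hnuw hS.nuSum ((Pop P)^[n] f)
      rw [hcenter n] at this; exact this
    have hle := le_Mx ((Pop P)^[n] f) x
    have hge := mx_le ((Pop P)^[n] f) x
    rw [abs_le]
    constructor <;> simp only [hu] <;> linarith
  -- summability of the series
  have hsuma : Summable (fun n : ℕ => ∑ x, f x * ((Pop P)^[n + 1] f) x * ν x) := by
    have habs2 : ∀ n : ℕ, |∑ x, f x * ((Pop P)^[n + 1] f) x * ν x|
        ≤ (∑ x, |f x| * ν x) * u (n + 1) := by
      intro n
      calc |∑ x, f x * ((Pop P)^[n + 1] f) x * ν x|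
          ≤ ∑ x, |f x * ((Pop P)^[n + 1] f) x * ν x| := Finset.abs_sum_le_sum_abs _ _
        _ ≤ ∑ x, |f x| * ν x * u (n + 1) := by
            apply Finset.sum_le_sum
            intro x _
            rw [abs_mul, abs_mul, abs_of_nonneg (hnuw x)]
            calc |f x| * |((Pop P)^[n + 1] f) x| * ν x
                ≤ |f x| * u (n + 1) * ν x :=
                  mul_le_mul_of_nonneg_right
                    (mul_le_mul_of_nonneg_left (habs (n + 1) x) (abs_nonneg _)) (hnuw x)
              _ = |f x| * ν x * u (n + 1) := by ring
        _ = (∑ x, |f x| * ν x) * u (n + 1) := by rw [Finset.sum_mul]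
    have hb : Summable (fun n : ℕ => (∑ x, |f x| * ν x) * u (n + 1)) :=
      ((summable_nat_add_iff 1).2 hsumu).mul_left _
    exact Summable.of_abs
      (Summable.of_nonneg_of_le (fun n => abs_nonneg _) habs2 hb)
  refine ⟨hsuma, ?_⟩
  -- the Poisson solution
  have hsumPf : ∀ x, Summable (fun n : ℕ => (Pop P)^[n] f x) := fun x =>
    Summable.of_abs (Summable.of_nonneg_of_le (fun n => abs_nonneg _)
      (fun n => habs n x) hsumu)
  set g : X → ℝ := fun x => ∑' n : ℕ, (Pop P)^[n] f x with hg
  have hsumPf' : ∀ x, Summable (fun n : ℕ => (Pop P)^[n + 1] f x) := fun x =>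
    (summable_nat_add_iff 1).2 (hsumPf x)
  have hPg : ∀ x, Pop P g x = ∑' n : ℕ, (Pop P)^[n + 1] f x := by
    intro x
    show ∑ x', P x x' * ∑' n : ℕ, (Pop P)^[n] f x' = _
    calc ∑ x', P x x' * ∑' n : ℕ, (Pop P)^[n] f x'
        = ∑ x', ∑' n : ℕ, P x x' * (Pop P)^[n] f x' := by
          congr 1; ext x'; rw [tsum_mul_left]
      _ = ∑' n : ℕ, ∑ x', P x x' * (Pop P)^[n] f x' :=
          (Summable.tsum_finsetSum (fun x' _ => (hsumPf x').mul_left (P x x'))).symm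
      _ = ∑' n : ℕ, (Pop P)^[n + 1] f x := by
          apply tsum_congr
          intro n
          rw [Function.iterate_succ_apply']
          rfl
  have hfg : ∀ x, f x = g x - Pop P g x := by
    intro x
    have h0 := Summable.tsum_eq_zero_add (hsumPf x)
    rw [Function.iterate_zero_apply] at h0
    rw [hPg x]
    simp only [hg]
    rw [h0]
    ring
  -- rewrite sigma2
  have key1 : ∑' n : ℕ, ∑ x, f x * ((Pop P)^[n + 1] f) x * ν x
      = ∑ x, f x * Pop P g x * ν x := by
    rw [Summable.tsum_finsetSum (fun x _ => ((hsumPf' x).mul_left (f x)).mul_right (ν x))]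
    congr 1; ext x
    rw [tsum_mul_right, tsum_mul_left, hPg x]
  have hsig : sigma2 P ν f = ∑ x, ν x * ∑ x', P x x' * (g x' - Pop P g x) ^ 2 := by
    rw [sigma2, key1]
    have step1 : (∑ x, f x ^ 2 * ν x) + 2 * ∑ x, f x * Pop P g x * ν x
        = ∑ x, ν x * (g x ^ 2) - ∑ x, ν x * (Pop P g x) ^ 2 := by
      rw [Finset.mul_sum, ← Finset.sum_add_distrib, ← Finset.sum_sub_distrib]
      apply Finset.sum_congr rfl
      intro x _
      rw [hfg x]
      ring
    rw [step1]
    have step2 : ∑ x, ν x * (g x ^ 2) = ∑ x, ν x * Pop P (fun y => g y ^ 2) x :=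
      (nu_Pop hS (fun y => g y ^ 2)).symm
    rw [step2, ← Finset.sum_sub_distrib]
    apply Finset.sum_congr rfl
    intro x _
    rw [← mul_sub]
    congr 1
    -- variance identity
    have expand : ∀ x', P x x' * (g x' - Pop P g x) ^ 2
        = P x x' * g x' ^ 2 - 2 * Pop P g x * (P x x' * g x') + (Pop P g x) ^ 2 * P x x' :=
      fun x' => by ring
    rw [Finset.sum_congr rfl (fun x' _ => expand x'), Finset.sum_add_distrib,
      Finset.sum_sub_distrib, ← Finset.mul_sum, ← Finset.mul_sum, hS.rowSum x]
    have : ∑ x', P x x' * g x' = Pop P g x := rfl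
    rw [this]
    have : ∑ x', P x x' * g x' ^ 2 = Pop P (fun y => g y ^ 2) x := rfl
    rw [this]
    ring
  have hterm : ∀ x, 0 ≤ ν x * ∑ x', P x x' * (g x' - Pop P g x) ^ 2 := by
    intro x
    apply mul_nonneg (hnuw x)
    exact Finset.sum_nonneg fun x' _ => mul_nonneg (hS.nonneg x x') (sq_nonneg _)
  have hσnonneg : 0 ≤ sigma2 P ν f := by
    rw [hsig]
    exact Finset.sum_nonneg fun x _ => hterm x
  rcases hσnonneg.lt_or_eq with hlt | heq
  · exact hlt
  · exfalso
    -- sigma2 = 0 : derive contradiction from the non-lattice condition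
    have hzero : ∀ x, ν x * ∑ x', P x x' * (g x' - Pop P g x) ^ 2 = 0 := by
      have := (Finset.sum_eq_zero_iff_of_nonneg (fun x _ => hterm x)).1 (by rw [← hsig, ← heq])
      intro x; exact this x (Finset.mem_univ x)
    have hconst : ∀ x x', 0 < P x x' → g x' = Pop P g x := by
      intro x x' hP
      have hx := hzero x
      have hν := hS.nuPos x
      have hinner : ∑ x', P x x' * (g x' - Pop P g x) ^ 2 = 0 := by
        rcases mul_eq_zero.1 hx with h | h
        · exact absurd h (ne_of_gt hν)
        · exact h
      have := (Finset.sum_eq_zero_iff_of_nonneg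
        (fun y _ => mul_nonneg (hS.nonneg x y) (sq_nonneg _))).1 hinner x' (Finset.mem_univ x')
      rcases mul_eq_zero.1 this with h | h
      · exact absurd h (ne_of_gt hP)
      · have := sq_eq_zero_iff.1 h
        linarith [sub_eq_zero.1 this]
    obtain ⟨n, gc, hprod, hne⟩ := h3 0 0
    have hfac : ∀ i : Fin (n + 1), 0 < P (gc i) (gc (i + 1)) := by
      intro i
      rcases (hS.nonneg (gc i) (gc (i + 1))).lt_or_eq with h | h
      · exact h
      · exfalso
        have : ∏ i : Fin (n + 1), P (gc i) (gc (i + 1)) = 0 :=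
          Finset.prod_eq_zero (Finset.mem_univ i) h.symm
        rw [this] at hprod
        exact lt_irrefl 0 hprod
    have hgc : ∀ i : Fin (n + 1), g (gc (i + 1)) = Pop P g (gc i) :=
      fun i => hconst _ _ (hfac i)
    have shift : ∀ F : Fin (n + 1) → ℝ, ∑ i, F (i + 1) = ∑ i, F i := by
      intro F
      exact Equiv.sum_comp (Equiv.addRight (1 : Fin (n + 1))) F
    have hsumf : ∑ i : Fin (n + 1), f (gc i) = 0 := by
      calc ∑ i : Fin (n + 1), f (gc i) = ∑ i : Fin (n + 1), f (gc (i + 1)) :=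
            (shift (fun i => f (gc i))).symm
        _ = ∑ i : Fin (n + 1), (Pop P g (gc i) - Pop P g (gc (i + 1))) := by
            apply Finset.sum_congr rfl
            intro i _
            rw [hfg (gc (i + 1)), hgc i]
        _ = 0 := by
            rw [Finset.sum_sub_distrib, shift (fun i => Pop P g (gc i)), sub_self]
    have := hne 0
    simp only [Int.cast_zero, mul_zero] at this
    apply this
    rw [hsumf]
    ring

end CLLT
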